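/- arXiv:1310.8390 — 3 statements merged into one kernel-verified Lean document; each statement's English description precedes it below -/
import Mathlib

section
/- (Edge Harnack step) Let Q : X → ℝ and let u : X → ℝ with u ≥ 0 satisfy −Δu + Q u = 0 on X. Then for every edge (x,y) ∈ E one has u(y) ≤ (1 + √(d̂_x · P(x))) · u(x), where P(x) = d̂_x (1 + Q(x))² − 2 Q(x) − 1 (note P(x) ≥ Q(x)² ≥ 0 since d̂_x ≥ 1). -/
open Finset Filter

noncomputable section

variable {V : Type*}

/-- The (weighted) degree `d_x = ∑_{(x,y) ∈ E} μ_{xy}` of a vertex `x` in a locally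
finite graph `G` with edge weights `μ`. -/
def deg (G : SimpleGraph V) [G.LocallyFinite] (μ : V → V → ℝ) (x : V) : ℝ :=
  ∑ y ∈ G.neighborFinset x, μ x y

/-- The graph Laplacian `(Δu)(x) = ∑_{(x,y) ∈ E} (μ_{xy}/d_x) (u(y) - u(x))`. -/
def lap (G : SimpleGraph V) [G.LocallyFinite] (μ : V → V → ℝ) (u : V → ℝ) (x : V) : ℝ :=
  ∑ y ∈ G.neighborFinset x, μ x y / deg G μ x * (u y - u x)

/-- The squared gradient `|∇u|²(x) = ∑_{(x,y) ∈ E} (μ_{xy}/d_x) (u(y) - u(x))²`. -/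
def gradSq (G : SimpleGraph V) [G.LocallyFinite] (μ : V → V → ℝ) (u : V → ℝ) (x : V) : ℝ :=
  ∑ y ∈ G.neighborFinset x, μ x y / deg G μ x * (u y - u x) ^ 2

/-- `d̂_x = sup_{(x,y) ∈ E} d_x / μ_{xy}`. -/
def dhat (G : SimpleGraph V) [G.LocallyFinite] (μ : V → V → ℝ) (x : V) : ℝ :=
  sSup {r : ℝ | ∃ y, G.Adj x y ∧ r = deg G μ x / μ x y}

/-- The principal (Dirichlet) eigenvalue `λ₁(D, -Δ+Q)` of a finite subset `D ⊆ X`: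
the infimum of the Rayleigh quotients `(∫_D (-Δu + Qu)·u) / (∫_D u²)` over test
functions `u` not identically zero on `D` and vanishing outside `D`, where
`∫_S f = ∑_{x ∈ S} f(x) d_x`. -/
def lambda1 (G : SimpleGraph V) [G.LocallyFinite] (μ : V → V → ℝ) (Q : V → ℝ)
    (D : Finset V) : ℝ :=
  sInf {r : ℝ | ∃ u : V → ℝ, (∃ x ∈ D, u x ≠ 0) ∧ (∀ x, x ∉ D → u x = 0) ∧
    r = (∑ x ∈ D, (-lap G μ u x + Q x * u x) * u x * deg G μ x) /
        (∑ x ∈ D, (u x) ^ 2 * deg G μ x)}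

/-- `λ₁(X, -Δ+Q)`: the limit of `λ₁(D_j, -Δ+Q)` along any exhaustion of `X` by finite
subsets; by monotonicity this equals the infimum of `λ₁(D, -Δ+Q)` over all nonempty
finite subsets `D` of `X`. -/
def lambda1Top (G : SimpleGraph V) [G.LocallyFinite] (μ : V → V → ℝ) (Q : V → ℝ) : ℝ :=
  sInf {r : ℝ | ∃ D : Finset V, D.Nonempty ∧ r = lambda1 G μ Q D}

/-- `H` is the Dirichlet Green function of the ball `B(j) = {x | d(x,x₀) < j}`:
it is nonnegative, and for every `y ∈ B(j)` one has `Δ_x H(x,y) = -δ_y(x)` for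
`x ∈ B(j)` and `H(x,y) = 0` for `x ∉ B(j)`. -/
def IsDirichletGreenOnBall (G : SimpleGraph V) [G.LocallyFinite] [DecidableEq V]
    (μ : V → V → ℝ) (x₀ : V) (j : ℕ) (H : V → V → ℝ) : Prop :=
  (∀ x y, 0 ≤ H x y) ∧
  ∀ y, G.dist y x₀ < j →
    (∀ x, G.dist x x₀ < j → lap G μ (fun z => H z y) x = -(if x = y then 1 else 0)) ∧
    (∀ x, ¬ G.dist x x₀ < j → H x y = 0)

/-!
At `x` the equation says that the `μ/d`-weighted mean of `u` over the neighbours of `x` is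
`(1 + Q x) u(x)`. Every weight is at least `1/d̂_x`, so a nonnegative function is at most
`d̂_x` times its mean at each neighbour. Applied to `u` this bounds the mean of `u²` by
`d̂_x (1 + Q x)² u(x)²`, hence `|∇u|²(x) ≤ P(x) u(x)²`; applied to `(u - u(x))²` it gives
`(u(y) - u(x))² ≤ d̂_x |∇u|²(x)`.
-/

/-- The mean-value operator: `lap` and `gradSq` are `nbrAvg` of `u - u x` and `(u - u x)²`. -/
def nbrAvg (G : SimpleGraph V) [G.LocallyFinite] (μ : V → V → ℝ) (f : V → ℝ) (x : V) : ℝ :=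
  ∑ z ∈ G.neighborFinset x, μ x z / deg G μ x * f z

section NeighbourAverage

variable {G : SimpleGraph V} [G.LocallyFinite] {μ : V → V → ℝ} {x y : V}

theorem deg_pos (hpos : ∀ z, G.Adj x z → 0 < μ x z) (hxy : G.Adj x y) : 0 < deg G μ x :=
  sum_pos (fun z hz => hpos z ((G.mem_neighborFinset x z).1 hz))
    ⟨y, (G.mem_neighborFinset x y).2 hxy⟩

theorem div_le_dhat (hxy : G.Adj x y) : deg G μ x / μ x y ≤ dhat G μ x := by
  refine le_csSup ?_ ⟨y, hxy, rfl⟩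
  refine (((G.neighborFinset x).finite_toSet.image fun z => deg G μ x / μ x z).bddAbove).mono ?_
  rintro r ⟨z, hz, rfl⟩
  exact ⟨z, (G.mem_neighborFinset x z).2 hz, rfl⟩

theorem one_le_dhat (hpos : ∀ z, G.Adj x z → 0 < μ x z) (hxy : G.Adj x y) :
    1 ≤ dhat G μ x := by
  have hle : μ x y ≤ deg G μ x :=
    single_le_sum (f := fun z => μ x z) (fun z hz => (hpos z ((G.mem_neighborFinset x z).1 hz)).le)
      ((G.mem_neighborFinset x y).2 hxy)
  exact ((one_le_div (hpos y hxy)).2 hle).trans (div_le_dhat hxy)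

theorem nbrAvg_const (hd : deg G μ x ≠ 0) (c : ℝ) : nbrAvg G μ (fun _ => c) x = c := by
  rw [nbrAvg, ← sum_mul, ← sum_div, ← deg, div_self hd, one_mul]

theorem nbrAvg_sub_const (hd : deg G μ x ≠ 0) (f : V → ℝ) (c : ℝ) :
    nbrAvg G μ (fun z => f z - c) x = nbrAvg G μ f x - c := by
  conv_rhs => rw [← nbrAvg_const hd c]
  simp only [nbrAvg, ← sum_sub_distrib, mul_sub]

theorem nbrAvg_sub_const_sq (hd : deg G μ x ≠ 0) (f : V → ℝ) (c : ℝ) :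
    nbrAvg G μ (fun z => (f z - c) ^ 2) x =
      nbrAvg G μ (fun z => f z ^ 2) x - 2 * c * nbrAvg G μ f x + c ^ 2 := by
  conv_rhs => rw [← nbrAvg_const hd (c ^ 2)]
  simp only [nbrAvg, mul_sum, ← sum_sub_distrib, ← sum_add_distrib]
  exact sum_congr rfl fun z _ => by ring

theorem div_deg_nonneg (hpos : ∀ z, G.Adj x z → 0 < μ x z) (hxy : G.Adj x y) :
    0 ≤ μ x y / deg G μ x :=
  div_nonneg (hpos y hxy).le (sum_nonneg fun z hz => (hpos z ((G.mem_neighborFinset x z).1 hz)).le)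

theorem nbrAvg_nonneg (hpos : ∀ z, G.Adj x z → 0 < μ x z) {f : V → ℝ}
    (hf : ∀ z, G.Adj x z → 0 ≤ f z) : 0 ≤ nbrAvg G μ f x :=
  sum_nonneg fun z hz =>
    have hz := (G.mem_neighborFinset x z).1 hz
    mul_nonneg (div_deg_nonneg hpos hz) (hf z hz)

theorem le_dhat_mul_nbrAvg (hpos : ∀ z, G.Adj x z → 0 < μ x z) {f : V → ℝ}
    (hf : ∀ z, G.Adj x z → 0 ≤ f z) (hxy : G.Adj x y) :
    f y ≤ dhat G μ x * nbrAvg G μ f x := by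
  have hd := deg_pos hpos hxy
  have hterm : μ x y / deg G μ x * f y ≤ nbrAvg G μ f x :=
    single_le_sum (f := fun z => μ x z / deg G μ x * f z)
      (fun z hz =>
        have hz := (G.mem_neighborFinset x z).1 hz
        mul_nonneg (div_deg_nonneg hpos hz) (hf z hz))
      ((G.mem_neighborFinset x y).2 hxy)
  calc f y = deg G μ x / μ x y * (μ x y / deg G μ x * f y) := by
        field_simp [(hpos y hxy).ne', hd.ne']
    _ ≤ deg G μ x / μ x y * nbrAvg G μ f x := by
        gcongr
        exact div_nonneg hd.le (hpos y hxy).le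
    _ ≤ dhat G μ x * nbrAvg G μ f x :=
        mul_le_mul_of_nonneg_right (div_le_dhat hxy) (nbrAvg_nonneg hpos hf)

theorem nbrAvg_sq_le (hpos : ∀ z, G.Adj x z → 0 < μ x z) {f : V → ℝ}
    (hf : ∀ z, G.Adj x z → 0 ≤ f z) :
    nbrAvg G μ (fun z => f z ^ 2) x ≤ dhat G μ x * nbrAvg G μ f x ^ 2 := by
  set M := dhat G μ x * nbrAvg G μ f x
  calc nbrAvg G μ (fun z => f z ^ 2) x
      ≤ ∑ z ∈ G.neighborFinset x, μ x z / deg G μ x * f z * M := by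
        refine sum_le_sum fun z hz => ?_
        have hz := (G.mem_neighborFinset x z).1 hz
        simp only [sq, ← mul_assoc]
        exact mul_le_mul_of_nonneg_left (le_dhat_mul_nbrAvg hpos hf hz)
          (mul_nonneg (div_deg_nonneg hpos hz) (hf z hz))
    _ = dhat G μ x * nbrAvg G μ f x ^ 2 := by
        rw [← sum_mul, ← nbrAvg]
        ring

theorem gradSq_le_of_nbrAvg_eq (hpos : ∀ z, G.Adj x z → 0 < μ x z)
    {u : V → ℝ} (hu : ∀ z, G.Adj x z → 0 ≤ u z) (hxy : G.Adj x y) {a : ℝ}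
    (ha : nbrAvg G μ u x = a * u x) :
    gradSq G μ u x ≤ (dhat G μ x * a ^ 2 - 2 * a + 1) * u x ^ 2 := by
  have hsq := nbrAvg_sq_le hpos hu
  have hexp : gradSq G μ u x = _ := nbrAvg_sub_const_sq (deg_pos hpos hxy).ne' u (u x)
  rw [ha] at hsq hexp
  linarith

end NeighbourAverage

theorem edge_harnack_step_general {V : Type*} (G : SimpleGraph V) [G.LocallyFinite]
    (μ : V → V → ℝ)
    (hpos : ∀ x y, G.Adj x y → 0 < μ x y)
    (Q : V → ℝ) (u : V → ℝ) (hu : ∀ y, 0 ≤ u y)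
    (heq : ∀ y, -lap G μ u y + Q y * u y = 0)
    (x y : V) (hxy : G.Adj x y) :
    u y ≤ (1 + Real.sqrt (dhat G μ x *
      (dhat G μ x * (1 + Q x) ^ 2 - 2 * Q x - 1))) * u x := by
  have havg : nbrAvg G μ u x = (1 + Q x) * u x := by
    have hlap : lap G μ u x = _ := nbrAvg_sub_const (deg_pos (hpos x) hxy).ne' u (u x)
    linarith [heq x]
  have hgrad := gradSq_le_of_nbrAvg_eq (hpos x) (fun z _ => hu z) hxy havg
  have hedge : (u y - u x) ^ 2 ≤ dhat G μ x * gradSq G μ u x :=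
    le_dhat_mul_nbrAvg (f := fun z => (u z - u x) ^ 2) (hpos x) (fun z _ => sq_nonneg _) hxy
  have hsq : (u y - u x) ^ 2 ≤
      dhat G μ x * (dhat G μ x * (1 + Q x) ^ 2 - 2 * Q x - 1) * u x ^ 2 := by
    have hD : 0 ≤ dhat G μ x := zero_le_one.trans (one_le_dhat (hpos x) hxy)
    linarith [mul_le_mul_of_nonneg_left hgrad hD]
  have habs := Real.abs_le_sqrt hsq
  rw [Real.sqrt_mul' _ (sq_nonneg _), Real.sqrt_sq (hu x)] at habs
  linarith [le_abs_self (u y - u x)]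

/-- Edge Harnack step: if `u ≥ 0` solves `-Δu + Qu = 0` on `X`,
then for every edge `(x,y) ∈ E` one has `u(y) ≤ (1 + √(d̂_x · P(x))) u(x)`,
where `P(x) = d̂_x (1 + Q(x))² - 2 Q(x) - 1`. -/
theorem edge_harnack_step {V : Type*} [Countable V] (G : SimpleGraph V) [G.LocallyFinite]
    (μ : V → V → ℝ) (hsymm : ∀ x y, μ x y = μ y x)
    (hpos : ∀ x y, G.Adj x y → 0 < μ x y) (hconn : G.Connected)
    (Q : V → ℝ) (u : V → ℝ) (hu : ∀ y, 0 ≤ u y)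
    (heq : ∀ y, -lap G μ u y + Q y * u y = 0)
    (x y : V) (hxy : G.Adj x y) :
    u y ≤ (1 + Real.sqrt (dhat G μ x *
      (dhat G μ x * (1 + Q x) ^ 2 - 2 * Q x - 1))) * u x :=
  edge_harnack_step_general G μ hpos Q u hu heq x y hxy
end
end

section
/- (Harnack inequality) Let Q : X → ℝ. For every finite subset S ⊂ X there exists a constant C = C(S) > 0, depending only on the weighted graph, Q, and S (and not on u), such that every function u : X → ℝ with u ≥ 0 satisfying −Δu + Q u = 0 on X obeys sup_{x ∈ S} u(x) ≤ C · inf_{x ∈ S} u(x). -/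
open Finset Filter

noncomputable section

variable {V : Type*}

/-!
At a vertex `x` the equation `-Δu + Qu = 0` says that the weighted mean
`∑_{z ~ x} (μ_{xz}/d_x) u(z)` equals `(1 + Q(x)) u(x)`. As `u ≥ 0`, each single term of that
mean is dominated by it, so `u(y) ≤ (d_x/μ_{xy}) (1 + Q(x)) u(x)` for every neighbour `y` of `x`.
Multiplying these constants along walks compares `u` at any two vertices of the connected graph,
and a finite `S` involves only finitely many pairs.
-/

section Harnack

variable {V : Type*} (G : SimpleGraph V) [G.LocallyFinite] (μ : V → V → ℝ) (Q : V → ℝ)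

def HarnackBound (C : ℝ) (x y : V) : Prop :=
  ∀ u : V → ℝ, (∀ z, 0 ≤ u z) → (∀ z, -lap G μ u z + Q z * u z = 0) → u y ≤ C * u x

variable {G μ Q}

theorem deg_pos_of_adj (hpos : ∀ x y, G.Adj x y → 0 < μ x y) {x y : V} (hxy : G.Adj x y) :
    0 < deg G μ x :=
  Finset.sum_pos (fun z hz => hpos x z ((G.mem_neighborFinset x z).mp hz))
    ⟨y, (G.mem_neighborFinset x y).mpr hxy⟩

theorem lap_eq_weighted_sum_sub {x : V} (hx : deg G μ x ≠ 0) (u : V → ℝ) :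
    lap G μ u x = ∑ z ∈ G.neighborFinset x, μ x z / deg G μ x * u z - u x := by
  have hweights : ∑ z ∈ G.neighborFinset x, μ x z / deg G μ x = 1 := by
    rw [← Finset.sum_div, ← deg, div_self hx]
  simp only [lap, mul_sub]
  rw [Finset.sum_sub_distrib, ← Finset.sum_mul, hweights, one_mul]

theorem HarnackBound.mono {C C' : ℝ} {x y : V} (h : HarnackBound G μ Q C x y) (hC : C ≤ C') :
    HarnackBound G μ Q C' x y := fun u hu hsol =>
  (h u hu hsol).trans (mul_le_mul_of_nonneg_right hC (hu x))

theorem HarnackBound.trans {C C' : ℝ} {x y z : V} (hxy : HarnackBound G μ Q C x y)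
    (hyz : HarnackBound G μ Q C' y z) (hC' : 0 ≤ C') :
    HarnackBound G μ Q (C' * C) x z := fun u hu hsol =>
  calc u z ≤ C' * u y := hyz u hu hsol
    _ ≤ C' * (C * u x) := mul_le_mul_of_nonneg_left (hxy u hu hsol) hC'
    _ = C' * C * u x := (mul_assoc _ _ _).symm

theorem harnackBound_of_adj (hpos : ∀ x y, G.Adj x y → 0 < μ x y) {x y : V} (hxy : G.Adj x y) :
    HarnackBound G μ Q (deg G μ x / μ x y * (1 + Q x)) x y := by
  intro u hu hsol
  have hd := deg_pos_of_adj hpos hxy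
  have hμ := hpos x y hxy
  have hmean : ∑ z ∈ G.neighborFinset x, μ x z / deg G μ x * u z = (1 + Q x) * u x := by
    linarith [hsol x, lap_eq_weighted_sum_sub hd.ne' u]
  have hterm : μ x y / deg G μ x * u y ≤ (1 + Q x) * u x :=
    hmean ▸ Finset.single_le_sum (f := fun z => μ x z / deg G μ x * u z)
      (fun z hz => mul_nonneg
        (div_nonneg (hpos x z ((G.mem_neighborFinset x z).mp hz)).le hd.le) (hu z))
      ((G.mem_neighborFinset x y).mpr hxy)
  calc u y = deg G μ x / μ x y * (μ x y / deg G μ x * u y) := by field_simp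
    _ ≤ deg G μ x / μ x y * ((1 + Q x) * u x) := by gcongr
    _ = deg G μ x / μ x y * (1 + Q x) * u x := (mul_assoc _ _ _).symm

theorem exists_harnackBound_of_walk (hpos : ∀ x y, G.Adj x y → 0 < μ x y) {x y : V}
    (p : G.Walk x y) : ∃ C, 0 < C ∧ HarnackBound G μ Q C x y := by
  induction p with
  | nil => exact ⟨1, one_pos, fun u _ _ => (one_mul _).ge⟩
  | @cons x y z hxy _ ih =>
    obtain ⟨C, hC, hyz⟩ := ih
    set C₀ := deg G μ x / μ x y * (1 + Q x)
    exact ⟨C * max C₀ 1, by positivity,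
      ((harnackBound_of_adj hpos hxy).mono (le_max_left C₀ 1)).trans hyz hC.le⟩

end Harnack

theorem harnack_inequality_general {V : Type*} (G : SimpleGraph V) [G.LocallyFinite]
    (μ : V → V → ℝ)
    (hpos : ∀ x y, G.Adj x y → 0 < μ x y) (hconn : G.Connected)
    (Q : V → ℝ) (S : Finset V) :
    ∃ C : ℝ, 0 < C ∧ ∀ u : V → ℝ, (∀ y, 0 ≤ u y) →
      (∀ y, -lap G μ u y + Q y * u y = 0) →
      ∀ x ∈ S, ∀ y ∈ S, u x ≤ C * u y := by
  have hpair (x y : V) : ∃ C, 0 < C ∧ HarnackBound G μ Q C y x :=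
    exists_harnackBound_of_walk hpos (hconn.preconnected y x).some
  choose f hf_pos hf using hpair
  obtain ⟨M, hM⟩ := ((S ×ˢ S).image fun p => f p.1 p.2).exists_le
  refine ⟨max M 1, by positivity, fun u hu hsol x hx y hy => ?_⟩
  have hfM : f x y ≤ max M 1 :=
    (hM _ (Finset.mem_image_of_mem _ (Finset.mk_mem_product hx hy))).trans (le_max_left M 1)
  exact ((hf x y).mono hfM) u hu hsol

/-- Harnack inequality: for every finite subset `S ⊆ X` there is a
constant `C = C(S) > 0`, independent of `u`, such that every nonnegative solution
`u` of `-Δu + Qu = 0` on `X` satisfies `sup_S u ≤ C · inf_S u`. -/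
theorem harnack_inequality {V : Type*} [Countable V] (G : SimpleGraph V) [G.LocallyFinite]
    (μ : V → V → ℝ) (hsymm : ∀ x y, μ x y = μ y x)
    (hpos : ∀ x y, G.Adj x y → 0 < μ x y) (hconn : G.Connected)
    (Q : V → ℝ) (S : Finset V) :
    ∃ C : ℝ, 0 < C ∧ ∀ u : V → ℝ, (∀ y, 0 ≤ u y) →
      (∀ y, -lap G μ u y + Q y * u y = 0) →
      ∀ x ∈ S, ∀ y ∈ S, u x ≤ C * u y :=
  harnack_inequality_general G μ hpos hconn Q S
end
end

section
/- (L² estimate for the Dirichlet problem) Let D ⊂ X be a finite subset with λ := λ₁(D, −Δ+Q) > 0, where Q : X → ℝ. If u : X → ℝ satisfies u ≥ 0, u = 0 outside D, and (−Δ + Q)u = f at every vertex of D, where f ≥ 0 on D, then ∫_D u² ≤ λ⁻² ∫_D f². -/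
open Finset Filter

noncomputable section

variable {V : Type*}

/-! Testing the infimum defining `λ` with `u` itself gives
`λ ∫_D u² ≤ ∫_D ((-Δ+Q)u) u = ∫_D f u`, and Cauchy–Schwarz for the weights `d` bounds
`∫_D f u` by `(∫_D f²)^{1/2} (∫_D u²)^{1/2}`; dividing by `(∫_D u²)^{1/2}` and squaring
gives the estimate. -/

lemma deg_nonneg {G : SimpleGraph V} [G.LocallyFinite] {μ : V → V → ℝ}
    (hpos : ∀ x y, G.Adj x y → 0 < μ x y) (x : V) : 0 ≤ deg G μ x :=
  sum_nonneg fun y hy => (hpos x y ((G.mem_neighborFinset x y).mp hy)).le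

lemma lambda1_mul_le {G : SimpleGraph V} [G.LocallyFinite] {μ : V → V → ℝ} {Q : V → ℝ}
    {D : Finset V} (hl : lambda1 G μ Q D ≠ 0) {u : V → ℝ} (hu0 : ∀ x, x ∉ D → u x = 0)
    (hA : 0 < ∑ x ∈ D, u x ^ 2 * deg G μ x) :
    lambda1 G μ Q D * ∑ x ∈ D, u x ^ 2 * deg G μ x
      ≤ ∑ x ∈ D, (-lap G μ u x + Q x * u x) * u x * deg G μ x := by
  have hne : ∃ x ∈ D, u x ≠ 0 := by
    by_contra! h
    exact hA.ne' (sum_eq_zero fun x hx => by simp [h x hx])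
  -- `sInf` of a set that is not bounded below is the junk value `0`.
  have hbdd : BddBelow {r : ℝ | ∃ u : V → ℝ, (∃ x ∈ D, u x ≠ 0) ∧ (∀ x, x ∉ D → u x = 0) ∧
      r = (∑ x ∈ D, (-lap G μ u x + Q x * u x) * u x * deg G μ x) /
        (∑ x ∈ D, (u x) ^ 2 * deg G μ x)} := by
    by_contra h
    exact hl (Real.sInf_of_not_bddBelow h)
  exact (le_div_iff₀ hA).mp (csInf_le hbdd ⟨u, hne, hu0, rfl⟩)

lemma sq_sum_mul_mul_le {ι : Type*} (s : Finset ι) {w : ι → ℝ} (hw : ∀ i ∈ s, 0 ≤ w i)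
    (f g : ι → ℝ) :
    (∑ i ∈ s, f i * g i * w i) ^ 2 ≤ (∑ i ∈ s, f i ^ 2 * w i) * ∑ i ∈ s, g i ^ 2 * w i :=
  sum_sq_le_sum_mul_sum_of_sq_le_mul s
    (fun i hi => mul_nonneg (sq_nonneg _) (hw i hi))
    (fun i hi => mul_nonneg (sq_nonneg _) (hw i hi)) (fun i _ => le_of_eq (by ring))

lemma le_inv_sq_mul_of_mul_le_of_sq_le_mul {l a b c : ℝ} (hl : 0 < l) (ha : 0 < a)
    (hlac : l * a ≤ c) (hcab : c ^ 2 ≤ b * a) : a ≤ l⁻¹ ^ 2 * b := by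
  have hlab : l ^ 2 * a ≤ b := by
    refine le_of_mul_le_mul_right ?_ ha
    nlinarith [mul_pos hl ha]
  rw [inv_pow, ← div_eq_inv_mul, le_div_iff₀ (by positivity)]
  linarith

theorem dirichlet_l2_estimate_general {V : Type*} (G : SimpleGraph V)
    [G.LocallyFinite]
    (μ : V → V → ℝ)
    (hpos : ∀ x y, G.Adj x y → 0 < μ x y)
    (Q : V → ℝ) (D : Finset V) (hl : 0 < lambda1 G μ Q D)
    (u f : V → ℝ) (hu0 : ∀ x, x ∉ D → u x = 0)
    (heq : ∀ x ∈ D, -lap G μ u x + Q x * u x = f x) :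
    ∑ x ∈ D, (u x) ^ 2 * deg G μ x
      ≤ (lambda1 G μ Q D)⁻¹ ^ 2 * ∑ x ∈ D, (f x) ^ 2 * deg G μ x := by
  have hdeg : ∀ x ∈ D, 0 ≤ deg G μ x := fun x _ => deg_nonneg hpos x
  rcases (sum_nonneg fun x hx => mul_nonneg (sq_nonneg (u x)) (hdeg x hx)).eq_or_lt
    with hA0 | hA
  · rw [← hA0]
    exact mul_nonneg (sq_nonneg _) (sum_nonneg fun x hx => mul_nonneg (sq_nonneg _) (hdeg x hx))
  have hrayleigh := lambda1_mul_le hl.ne' hu0 hA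
  rw [sum_congr rfl fun x hx => congrArg (· * u x * deg G μ x) (heq x hx)] at hrayleigh
  exact le_inv_sq_mul_of_mul_le_of_sq_le_mul hl hA hrayleigh (sq_sum_mul_mul_le D hdeg f u)

/-- L² estimate for the Dirichlet problem: if `D` is finite with
`λ := λ₁(D, -Δ+Q) > 0`, `u ≥ 0` vanishes outside `D` and solves `(-Δ+Q)u = f` on
`D` with `f ≥ 0` on `D`, then `∫_D u² ≤ λ⁻² ∫_D f²`
(where `∫_S g = ∑_{x ∈ S} g(x) d_x`). -/
theorem dirichlet_l2_estimate {V : Type*} [Countable V] (G : SimpleGraph V)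
    [G.LocallyFinite]
    (μ : V → V → ℝ) (hsymm : ∀ x y, μ x y = μ y x)
    (hpos : ∀ x y, G.Adj x y → 0 < μ x y) (hconn : G.Connected)
    (Q : V → ℝ) (D : Finset V) (hl : 0 < lambda1 G μ Q D)
    (u f : V → ℝ) (hu : ∀ x, 0 ≤ u x) (hu0 : ∀ x, x ∉ D → u x = 0)
    (heq : ∀ x ∈ D, -lap G μ u x + Q x * u x = f x)
    (hf : ∀ x ∈ D, 0 ≤ f x) :
    ∑ x ∈ D, (u x) ^ 2 * deg G μ x
      ≤ (lambda1 G μ Q D)⁻¹ ^ 2 * ∑ x ∈ D, (f x) ^ 2 * deg G μ x :=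
  dirichlet_l2_estimate_general G μ hpos Q D hl u f hu0 heq
end
end
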